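/- Let v = (v₁₂, v₁₃, v₁₄, v₂₃, v₂₄, v₃₄) ∈ ℤ≥0⁶ satisfy all three Plücker-type inequalities strictly (i.e., v is an interior point of the discrete Plücker set), and suppose two adjacent coordinates of v equal 1, i.e., there are indices i, j, k ∈ {1,2,3,4} with j ≠ k, j ≠ i, k ≠ i such that v_{ij} = v_{ik} = 1 (where v_{pq} = v_{qp}). Then there exist lattice polytopes P₁, P₂, P₃, P₄ in ℝ² such that V(Pᵢ,Pⱼ) = v_{ij} for all 1 ≤ i < j ≤ 4. -/

import Mathlib

open MeasureTheory Pointwise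

/-- Normalized mixed area of two compact convex sets in ℝ². -/
noncomputable def mixedArea (P Q : Set (ℝ × ℝ)) : ℝ :=
  (volume (P + Q)).toReal - (volume P).toReal - (volume Q).toReal

/-- Embedding of ℤ² into ℝ². -/
def latticeEmbed (p : ℤ × ℤ) : ℝ × ℝ := ((p.1 : ℝ), (p.2 : ℝ))

/-- A lattice polytope in ℝ² is the convex hull of a finite nonempty set of lattice points. -/
def IsLatticePolytope (P : Set (ℝ × ℝ)) : Prop :=
  ∃ S : Finset (ℤ × ℤ), S.Nonempty ∧ P = convexHull ℝ (latticeEmbed '' (S : Set (ℤ × ℤ)))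

/-!
For a segment `[0, u]` and a compact convex set `K`, the mixed area `V([0, u], K)` is the width of
`K` across `u`, the length of the image of `K` under `p ↦ u.1 * p.2 - u.2 * p.1`: a linear map of
determinant `-1` sends `u` to `(0, 1)`, and adding the vertical unit segment to `K` lengthens each
nonempty vertical fibre by `1`, so Fubini gives the width.

Relabel so that `v₁₂ = v₁₃ = 1` and put `c = v₁₄`, `d = v₂₃`, `e = v₂₄`, `f = v₃₄` with `f ≤ e`;
the strict Plücker inequalities become strict triangle inequalities for `c * d`, `e`, `f`. Take
for `P₁, P₂, P₃` the segments from `0` to `(0, 1)`, `(1, 0)`, `(1, d)` and for `P₄` the triangle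
with vertices `0`, `(c, max e (c * d) - f)`, `(c, e)`, whose widths across these directions are
`c`, `e`, `f`.
-/

open Set

theorem Real.volume_add_of_isCompact_of_convex {s t : Set ℝ} (hs : IsCompact s)
    (hsc : Convex ℝ s) (hsne : s.Nonempty) (ht : IsCompact t) (htc : Convex ℝ t)
    (htne : t.Nonempty) : volume (s + t) = volume s + volume t := by
  have hs' := csInf_le_csSup hsne hs.bddBelow hs.bddAbove
  have ht' := csInf_le_csSup htne ht.bddBelow ht.bddAbove
  rw [eq_Icc_of_connected_compact (hsc.isConnected hsne) hs,
    eq_Icc_of_connected_compact (htc.isConnected htne) ht, Icc_add_Icc hs' ht',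
    Real.volume_Icc, Real.volume_Icc, Real.volume_Icc,
    ← ENNReal.ofReal_add (sub_nonneg.2 hs') (sub_nonneg.2 ht')]
  congr 1
  ring

theorem Real.convexHull_triple (a b c : ℝ) :
    convexHull ℝ {a, b, c} = Icc (min a (min b c)) (max a (max b c)) := by
  refine (convexHull_min ?_ (convex_Icc _ _)).antisymm ?_
  · rintro x (rfl | rfl | rfl) <;> simp
  · have hmin : min a (min b c) ∈ ({a, b, c} : Set ℝ) := by
      rcases le_total a (min b c) with h | h
      · simp [min_eq_left h]
      · rcases min_choice b c with h' | h' <;> rw [min_eq_right h, h'] <;> simp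
    have hmax : max a (max b c) ∈ ({a, b, c} : Set ℝ) := by
      rcases le_total (max b c) a with h | h
      · simp [max_eq_left h]
      · rcases max_choice b c with h' | h' <;> rw [max_eq_right h, h'] <;> simp
    rw [← segment_eq_Icc ((min_le_left _ _).trans (le_max_left _ _))]
    exact segment_subset_convexHull hmin hmax

theorem preimage_prodMk_zero_prod_add {α β : Type*} [AddZeroClass α] [Add β] (x : α)
    (t : Set β) (K : Set (α × β)) : Prod.mk x ⁻¹' ({0} ×ˢ t + K) = t + Prod.mk x ⁻¹' K := by
  ext y
  simp only [mem_preimage, Set.mem_add, mem_prod, mem_singleton_iff, Prod.exists]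
  constructor
  · rintro ⟨_, b, ⟨rfl, hb⟩, a, c, hac, he⟩
    simp only [Prod.mk_add_mk, zero_add, Prod.mk.injEq] at he
    obtain ⟨rfl, rfl⟩ := he
    exact ⟨b, hb, c, hac, rfl⟩
  · rintro ⟨b, hb, c, hc, rfl⟩
    exact ⟨0, b, ⟨rfl, hb⟩, x, c, hc, by simp⟩

theorem IsCompact.preimage_prodMk {X Y : Type*} [TopologicalSpace X] [TopologicalSpace Y]
    [T1Space X] {K : Set (X × Y)} (hK : IsCompact K) (x : X) : IsCompact (Prod.mk x ⁻¹' K) := by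
  refine (isEmbedding_prodMkRight x).isInducing.isCompact_preimage ?_ hK
  have : range (Prod.mk x : Y → X × Y) = {x} ×ˢ univ := by ext ⟨a, b⟩; simp [eq_comm]
  rw [this]
  exact isClosed_singleton.prod isClosed_univ

theorem Convex.preimage_prodMk {𝕜 E F : Type*} [Semiring 𝕜] [PartialOrder 𝕜] [AddCommMonoid E]
    [AddCommMonoid F] [Module 𝕜 E] [Module 𝕜 F] {K : Set (E × F)} (hK : Convex 𝕜 K) (x : E) :
    Convex 𝕜 (Prod.mk x ⁻¹' K) := fun y hy z hz a b ha hb hab => by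
  simpa [← add_smul, hab] using hK hy hz ha hb hab

theorem volume_zero_prod_add {t : Set ℝ} (ht : IsCompact t) (htc : Convex ℝ t)
    (htne : t.Nonempty) {K : Set (ℝ × ℝ)} (hK : IsCompact K) (hKc : Convex ℝ K) :
    volume ({0} ×ˢ t + K) = volume t * volume (Prod.fst '' K) + volume K := by
  have hfst : MeasurableSet (Prod.fst '' K) := (hK.image continuous_fst).isClosed.measurableSet
  have hfiber : ∀ x, volume (Prod.mk x ⁻¹' ({0} ×ˢ t + K))
      = (Prod.fst '' K).indicator (fun _ => volume t) x + volume (Prod.mk x ⁻¹' K) := by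
    intro x
    rw [preimage_prodMk_zero_prod_add]
    rcases (Prod.mk x ⁻¹' K).eq_empty_or_nonempty with hx | hx
    · have : x ∉ Prod.fst '' K := fun ⟨p, hp, hpx⟩ => hx.subset (show p.2 ∈ _ by simpa [← hpx])
      simp [hx, this]
    · have : x ∈ Prod.fst '' K := let ⟨y, hy⟩ := hx; ⟨(x, y), hy, rfl⟩
      rw [indicator_of_mem this, Real.volume_add_of_isCompact_of_convex ht htc htne
        (hK.preimage_prodMk x) (hKc.preimage_prodMk x) hx]
  rw [Measure.volume_eq_prod, Measure.prod_apply
      ((isCompact_singleton.prod ht).add hK).isClosed.measurableSet,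
    Measure.prod_apply hK.isClosed.measurableSet, lintegral_congr hfiber,
    lintegral_add_left (measurable_const.indicator hfst), lintegral_indicator_const hfst]

theorem mixedArea_comm (P Q : Set (ℝ × ℝ)) : mixedArea P Q = mixedArea Q P := by
  rw [mixedArea, mixedArea, add_comm P Q]
  ring

theorem mixedArea_image_linearMap (f : ℝ × ℝ →ₗ[ℝ] ℝ × ℝ) (P Q : Set (ℝ × ℝ)) :
    mixedArea (f '' P) (f '' Q) = |LinearMap.det f| * mixedArea P Q := by
  simp only [mixedArea, ← image_add, Measure.addHaar_image_linearMap, ENNReal.toReal_mul,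
    ENNReal.toReal_ofReal (abs_nonneg _)]
  ring

theorem mixedArea_zero_prod {t : Set ℝ} (ht : IsCompact t) (htc : Convex ℝ t)
    (htne : t.Nonempty) {K : Set (ℝ × ℝ)} (hK : IsCompact K) (hKc : Convex ℝ K) :
    mixedArea ({0} ×ˢ t) K = (volume t).toReal * (volume (Prod.fst '' K)).toReal := by
  rw [mixedArea, volume_zero_prod_add ht htc htne hK hKc, ENNReal.toReal_add
      (ENNReal.mul_ne_top ht.measure_ne_top (hK.image continuous_fst).measure_ne_top)
      hK.measure_ne_top, ENNReal.toReal_mul, Measure.volume_eq_prod, Measure.prod_prod]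
  simp

noncomputable def planeCross (u : ℝ × ℝ) : ℝ × ℝ →ₗ[ℝ] ℝ :=
  u.1 • LinearMap.snd ℝ ℝ ℝ - u.2 • LinearMap.fst ℝ ℝ ℝ

@[simp]
theorem planeCross_apply (u p : ℝ × ℝ) : planeCross u p = u.1 * p.2 - u.2 * p.1 := rfl

theorem mixedArea_segment {u : ℝ × ℝ} (hu : u ≠ 0) {K : Set (ℝ × ℝ)} (hK : IsCompact K)
    (hKc : Convex ℝ K) :
    mixedArea (segment ℝ 0 u) K = (volume (planeCross u '' K)).toReal := by
  have hn : u.1 ^ 2 + u.2 ^ 2 ≠ 0 := by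
    contrapose! hu
    exact Prod.ext (by simp; nlinarith) (by simp; nlinarith)
  set B := Matrix.toLin (Module.Basis.finTwoProd ℝ) (Module.Basis.finTwoProd ℝ)
    !![-u.2, u.1; u.1 / (u.1 ^ 2 + u.2 ^ 2), u.2 / (u.1 ^ 2 + u.2 ^ 2)]
  have hdet : LinearMap.det B = -1 := by
    rw [LinearMap.det_toLin, Matrix.det_fin_two_of]
    field_simp
    ring
  have hBu : B u = (0, 1) := by
    simp only [B, Matrix.toLin_finTwoProd_apply, Prod.mk.injEq]
    constructor
    · ring
    · field_simp
  have hseg : B '' segment ℝ 0 u = {0} ×ˢ Icc 0 1 := by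
    rw [← B.coe_toAffineMap, image_segment, LinearMap.coe_toAffineMap, map_zero, hBu,
      ← Prod.mk_zero_zero, ← Prod.image_mk_segment_right, segment_eq_Icc zero_le_one,
      singleton_prod]
  have hfst : Prod.fst '' (B '' K) = planeCross u '' K := by
    rw [image_image]
    congr
    ext p
    simp [B]
    ring
  rw [← one_mul (mixedArea _ _), ← abs_one, ← abs_neg, ← hdet, ← mixedArea_image_linearMap, hseg,
    mixedArea_zero_prod isCompact_Icc (convex_Icc 0 1) (nonempty_Icc.2 zero_le_one)
      (hK.image B.continuous_of_finiteDimensional) (hKc.linear_image B), hfst]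
  simp

theorem mixedArea_segment_convexHull {u : ℝ × ℝ} (hu : u ≠ 0) {s : Set (ℝ × ℝ)}
    (hs : s.Finite) :
    mixedArea (segment ℝ 0 u) (convexHull ℝ s) =
      (volume (convexHull ℝ (planeCross u '' s))).toReal := by
  rw [mixedArea_segment hu (hs.isCompact_convexHull (𝕜 := ℝ)) (convex_convexHull ℝ s),
    LinearMap.image_convexHull]

theorem mixedArea_segment_segment {u : ℝ × ℝ} (hu : u ≠ 0) (w : ℝ × ℝ) :
    mixedArea (segment ℝ 0 u) (segment ℝ 0 w) = |planeCross u w| := by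
  rw [← convexHull_pair 0 w, mixedArea_segment_convexHull hu (toFinite _), image_pair, map_zero,
    convexHull_pair, segment_eq_uIcc, Real.volume_interval, ENNReal.toReal_ofReal (abs_nonneg _),
    sub_zero]

theorem mixedArea_segment_triangle {u : ℝ × ℝ} (hu : u ≠ 0) (p q : ℝ × ℝ) :
    mixedArea (segment ℝ 0 u) (convexHull ℝ {0, p, q}) =
      max 0 (max (planeCross u p) (planeCross u q)) -
        min 0 (min (planeCross u p) (planeCross u q)) := by
  rw [mixedArea_segment_convexHull hu (toFinite _), image_insert_eq, image_pair, map_zero,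
    Real.convexHull_triple, Real.volume_Icc,
    ENNReal.toReal_ofReal (sub_nonneg.2 ((min_le_left _ _).trans (le_max_left _ _)))]

@[simp]
theorem latticeEmbed_zero : latticeEmbed 0 = 0 := by simp [latticeEmbed]

theorem isLatticePolytope_segment (p : ℤ × ℤ) :
    IsLatticePolytope (segment ℝ 0 (latticeEmbed p)) :=
  ⟨{0, p}, by simp, by simp [image_insert_eq, convexHull_pair]⟩

theorem isLatticePolytope_triangle (p q : ℤ × ℤ) :
    IsLatticePolytope (convexHull ℝ {0, latticeEmbed p, latticeEmbed q}) :=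
  ⟨{0, p, q}, by simp, by simp [image_insert_eq]⟩

theorem exists_latticePolytopes_mixedArea (c d e f : ℕ) (hfe : f ≤ e) (he : e < f + c * d)
    (hcd : c * d < e + f) :
    ∃ P₁ P₂ P₃ P₄ : Set (ℝ × ℝ), IsLatticePolytope P₁ ∧ IsLatticePolytope P₂ ∧
      IsLatticePolytope P₃ ∧ IsLatticePolytope P₄ ∧
      mixedArea P₁ P₂ = 1 ∧ mixedArea P₁ P₃ = 1 ∧ mixedArea P₁ P₄ = c ∧
      mixedArea P₂ P₃ = d ∧ mixedArea P₂ P₄ = e ∧ mixedArea P₃ P₄ = f := by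
  have hfe' : (f : ℝ) ≤ e := by exact_mod_cast hfe
  have he' : (e : ℝ) < f + c * d := by exact_mod_cast he
  have hcd' : (c : ℝ) * d < e + f := by exact_mod_cast hcd
  have h01 : latticeEmbed (0, 1) ≠ 0 := by simp [latticeEmbed, Prod.ext_iff]
  have h10 : latticeEmbed (1, 0) ≠ 0 := by simp [latticeEmbed, Prod.ext_iff]
  have h1d : latticeEmbed (1, d) ≠ 0 := by simp [latticeEmbed, Prod.ext_iff]
  set b : ℤ := max (e : ℤ) (c * d) - f
  refine ⟨_, _, _, _, isLatticePolytope_segment (0, 1), isLatticePolytope_segment (1, 0),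
    isLatticePolytope_segment (1, d), isLatticePolytope_triangle (c, b) (c, e),
    ?_, ?_, ?_, ?_, ?_, ?_⟩
  · rw [mixedArea_segment_segment h01]; simp [latticeEmbed]
  · rw [mixedArea_segment_segment h01]; simp [latticeEmbed]
  · rw [mixedArea_segment_triangle h01]; simp [latticeEmbed]
  · rw [mixedArea_segment_segment h10]; simp [latticeEmbed]
  · rw [mixedArea_segment_triangle h10]
    push_cast [latticeEmbed, b, planeCross_apply]
    simp only [max_def, min_def]
    split_ifs <;> linarith
  · rw [mixedArea_segment_triangle h1d]
    push_cast [latticeEmbed, b, planeCross_apply]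
    simp only [max_def, min_def]
    split_ifs <;> linarith

def PluckerInterior (v : Fin 4 → Fin 4 → ℕ) (i j k l : Fin 4) : Prop :=
  v i j * v k l < v i k * v j l + v i l * v j k ∧
  v i k * v j l < v i l * v j k + v i j * v k l ∧
  v i l * v j k < v i j * v k l + v i k * v j l

theorem PluckerInterior.of_pairwise_ne {v : Fin 4 → Fin 4 → ℕ} (hsymm : ∀ i j, v i j = v j i)
    (h : PluckerInterior v 0 1 2 3) {i j k l : Fin 4} (hij : i ≠ j) (hik : i ≠ k) (hil : i ≠ l)
    (hjk : j ≠ k) (hjl : j ≠ l) (hkl : k ≠ l) : PluckerInterior v i j k l := by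
  obtain ⟨h₁, h₂, h₃⟩ := h
  fin_cases i <;> fin_cases j <;> simp at hij <;> fin_cases k <;> simp at hik hjk <;>
    fin_cases l <;> simp at hil hjl hkl <;>
    simp only [PluckerInterior, Fin.reduceFinMk, hsymm 1 0, hsymm 2 0, hsymm 3 0, hsymm 2 1,
      hsymm 3 1, hsymm 3 2] <;>
    refine ⟨?_, ?_, ?_⟩ <;> linarith

theorem exists_realization_of_pairwise_ne {v : Fin 4 → Fin 4 → ℕ}
    (hsymm : ∀ i j, v i j = v j i) (hpl : PluckerInterior v 0 1 2 3) {i j k l : Fin 4}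
    (hij : i ≠ j) (hik : i ≠ k) (hil : i ≠ l) (hjk : j ≠ k) (hjl : j ≠ l) (hkl : k ≠ l)
    (hvij : v i j = 1) (hvik : v i k = 1) :
    ∃ P : Fin 4 → Set (ℝ × ℝ), (∀ a, IsLatticePolytope (P a)) ∧
      ∀ a b, a < b → mixedArea (P a) (P b) = v a b := by
  wlog hfe : v k l ≤ v j l generalizing j k
  · exact this hik hij hjk.symm hkl hjl hvik hvij (le_of_not_ge hfe)
  obtain ⟨-, he, hcd⟩ := hpl.of_pairwise_ne hsymm hij hik hil hjk hjl hkl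
  rw [hvij, hvik, one_mul, one_mul] at he hcd
  obtain ⟨P₁, P₂, P₃, P₄, hP₁, hP₂, hP₃, hP₄, h₁₂, h₁₃, h₁₄, h₂₃, h₂₄, h₃₄⟩ :=
    exists_latticePolytopes_mixedArea (v i l) (v j k) (v j l) (v k l) hfe (by linarith)
      (by linarith)
  have hσ : Function.Injective ![i, j, k, l] := by
    intro x y hxy
    fin_cases x <;> fin_cases y <;> simp_all [eq_comm]
  set σ := Equiv.ofBijective _ hσ.bijective_of_finite
  set Q : Fin 4 → Set (ℝ × ℝ) := ![P₁, P₂, P₃, P₄]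
  have hQ : ∀ x, IsLatticePolytope (Q x) := by
    intro x
    fin_cases x <;> assumption
  have hlt : ∀ x y, x < y → mixedArea (Q x) (Q y) = v (σ x) (σ y) := by
    intro x y hxy
    fin_cases x <;> fin_cases y <;> simp_all [Q, σ]
  have hne : ∀ x y, x ≠ y → mixedArea (Q x) (Q y) = v (σ x) (σ y) := by
    intro x y hxy
    rcases hxy.lt_or_gt with h | h
    · exact hlt x y h
    · rw [mixedArea_comm, hsymm, hlt y x h]
  refine ⟨Q ∘ σ.symm, fun a => hQ _, fun a b hab => ?_⟩
  simpa using hne (σ.symm a) (σ.symm b) (σ.symm.injective.ne hab.ne)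

/-- An interior point of the discrete Plücker set (all three Plücker-type inequalities
strict) with two adjacent coordinates equal to `1` is realized by four lattice polytopes.
Here the tuple is encoded as a symmetric function `v : Fin 4 → Fin 4 → ℕ` on the edges
of `K₄`. -/
theorem interior_two_ones_realizable (v : Fin 4 → Fin 4 → ℕ)
    (hsymm : ∀ i j, v i j = v j i)
    (hpl₁ : v 0 3 * v 1 2 < v 0 1 * v 2 3 + v 0 2 * v 1 3)
    (hpl₂ : v 0 1 * v 2 3 < v 0 2 * v 1 3 + v 0 3 * v 1 2)
    (hpl₃ : v 0 2 * v 1 3 < v 0 3 * v 1 2 + v 0 1 * v 2 3)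
    (hadj : ∃ i j k : Fin 4, j ≠ k ∧ i ≠ j ∧ i ≠ k ∧ v i j = 1 ∧ v i k = 1) :
    ∃ P : Fin 4 → Set (ℝ × ℝ),
      (∀ i, IsLatticePolytope (P i)) ∧
      (∀ i j, i < j → mixedArea (P i) (P j) = (v i j : ℝ)) := by
  obtain ⟨i, j, k, hjk, hij, hik, hvij, hvik⟩ := hadj
  obtain ⟨l, hli, hlj, hlk⟩ : ∃ l, l ≠ i ∧ l ≠ j ∧ l ≠ k := by
    clear hvij hvik hjk hij hik
    decide +revert
  exact exists_realization_of_pairwise_ne hsymm ⟨hpl₂, hpl₃, hpl₁⟩ hij hik hli.symm hjk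
    hlj.symm hlk.symm hvij hvik
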